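/- In SL^{n,m}, the derived subalgebra [SL^{n,m}, SL^{n,m}] equals the nilradical L^{n,m} = span{x_1,...,x_n,y_1,...,y_m}; in particular (SL^{n,m})^2 is nilpotent, and SL^{n,m} is solvable but not nilpotent. -/

import Mathlib

/-
Give `x_i`, `y_j` weight `i`, `j` and the `t_s` weight `0`. The bracket adds weights and never
produces a `t_s`, so the derived algebra lies in the span of the vectors of weight `≥ 1`, which is
the nilradical; the `k`-th term of the derived series has weight `≥ k`, and that of the lower
central series of the derived algebra weight `≥ k + 1`. Weights are at most `max n m`, so both
series reach `0`.
Conversely `ad t_1` multiplies `x_i`, `y_j` by the nonzero scalars `i`, `j`, so each is a bracket;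
and `[x_1, t_1] = -x_1` keeps `x_1` in every term of the lower central series.
-/

namespace SolvableModelFiliform

/-- Index type of `SL^{n,m}`: `x`-indices, then `t`-indices, then `y`-indices (0-based). -/
abbrev Idx (n m : ℕ) := Fin n ⊕ (Fin 3 ⊕ Fin m)

/-- Underlying vector space over ℂ. -/
abbrev V (n m : ℕ) := Idx n m →₀ ℂ

/-- `X n m k` is the basis vector `x_k` (1-based), or `0` if out of range. -/
noncomputable def X (n m k : ℕ) : V n m :=
  if h : 1 ≤ k ∧ k ≤ n then Finsupp.single (Sum.inl ⟨k - 1, by omega⟩) 1 else 0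

/-- `T n m s` is the basis vector `t_s` (`s ∈ {1,2,3}`), or `0` if out of range. -/
noncomputable def T (n m s : ℕ) : V n m :=
  if h : 1 ≤ s ∧ s ≤ 3 then Finsupp.single (Sum.inr (Sum.inl ⟨s - 1, by omega⟩)) 1 else 0

/-- `Y n m k` is the basis vector `y_k` (1-based), or `0` if out of range. -/
noncomputable def Y (n m k : ℕ) : V n m :=
  if h : 1 ≤ k ∧ k ≤ m then Finsupp.single (Sum.inr (Sum.inr ⟨k - 1, by omega⟩)) 1 else 0

/-- Structure constants of `SL^{n,m}`:
`[x_1,x_i] = x_{i+1}` (2 ≤ i ≤ n-1), `[x_1,y_j] = y_{j+1}` (1 ≤ j ≤ m-1),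
`[t_1,x_i] = i x_i`, `[t_1,y_j] = j y_j`, `[t_2,x_i] = x_i` (2 ≤ i ≤ n),
`[t_3,y_j] = y_j`, extended skew-symmetrically. -/
noncomputable def c (n m : ℕ) : Idx n m → Idx n m → V n m
  | Sum.inl i, Sum.inl j =>
      if i.val = 0 ∧ 1 ≤ j.val then X n m (j.val + 2)
      else if j.val = 0 ∧ 1 ≤ i.val then -X n m (i.val + 2) else 0
  | Sum.inl i, Sum.inr (Sum.inr j) => if i.val = 0 then Y n m (j.val + 2) else 0
  | Sum.inr (Sum.inr j), Sum.inl i => if i.val = 0 then -Y n m (j.val + 2) else 0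
  | Sum.inr (Sum.inl s), Sum.inl i =>
      if s.val = 0 then ((i.val + 1 : ℕ) : ℂ) • X n m (i.val + 1)
      else if s.val = 1 ∧ 1 ≤ i.val then X n m (i.val + 1) else 0
  | Sum.inl i, Sum.inr (Sum.inl s) =>
      -(if s.val = 0 then ((i.val + 1 : ℕ) : ℂ) • X n m (i.val + 1)
        else if s.val = 1 ∧ 1 ≤ i.val then X n m (i.val + 1) else 0)
  | Sum.inr (Sum.inl s), Sum.inr (Sum.inr j) =>
      if s.val = 0 then ((j.val + 1 : ℕ) : ℂ) • Y n m (j.val + 1)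
      else if s.val = 2 then Y n m (j.val + 1) else 0
  | Sum.inr (Sum.inr j), Sum.inr (Sum.inl s) =>
      -(if s.val = 0 then ((j.val + 1 : ℕ) : ℂ) • Y n m (j.val + 1)
        else if s.val = 2 then Y n m (j.val + 1) else 0)
  | Sum.inr (Sum.inl _), Sum.inr (Sum.inl _) => 0
  | Sum.inr (Sum.inr _), Sum.inr (Sum.inr _) => 0

/-- The bracket of `SL^{n,m}`, as a bilinear map. -/
noncomputable def brL (n m : ℕ) : V n m →ₗ[ℂ] V n m →ₗ[ℂ] V n m :=
  Finsupp.lsum ℂ (fun a =>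
    LinearMap.toSpanSingleton ℂ (V n m →ₗ[ℂ] V n m)
      (Finsupp.lsum ℂ (fun b => LinearMap.toSpanSingleton ℂ (V n m) (c n m a b))))

/-- The bracket. -/
noncomputable def br (n m : ℕ) (u v : V n m) : V n m := brL n m u v

/-- Parity of the basis indices (`x`'s and `t`'s even, `y`'s odd). -/
def par (n m : ℕ) : Idx n m → ZMod 2 :=
  Sum.elim (fun _ => 0) (Sum.elim (fun _ => 0) (fun _ => 1))

/-- `u` is homogeneous of degree `s`. -/
def IsHomog (n m : ℕ) (u : V n m) (s : ZMod 2) : Prop :=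
  ∀ a ∈ u.support, par n m a = s

/-- An even superderivation: parity-preserving and `D[u,v] = [Du,v] + [u,Dv]`. -/
def IsEvenDer (n m : ℕ) (D : Module.End ℂ (V n m)) : Prop :=
  (∀ (u : V n m) (s : ZMod 2), IsHomog n m u s → IsHomog n m (D u) s) ∧
  (∀ u v : V n m, D (br n m u v) = br n m (D u) v + br n m u (D v))

/-- An odd superderivation: parity-reversing and
`D[u,v] = [Du,v] + (-1)^{|u|}[u,Dv]` for homogeneous `u`. -/
def IsOddDer (n m : ℕ) (D : Module.End ℂ (V n m)) : Prop :=
  (∀ (u : V n m) (s : ZMod 2), IsHomog n m u s → IsHomog n m (D u) (s + 1)) ∧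
  (∀ (u v : V n m) (su : ZMod 2), IsHomog n m u su →
    D (br n m u v) = br n m (D u) v + ((-1 : ℂ) ^ su.val) • br n m u (D v))

/-- The derived subalgebra `[SL^{n,m}, SL^{n,m}]`. -/
noncomputable def derSub (n m : ℕ) : Submodule ℂ (V n m) :=
  Submodule.span ℂ {z | ∃ u v : V n m, z = br n m u v}

/-- Derived series. -/
noncomputable def ds (n m : ℕ) : ℕ → Submodule ℂ (V n m)
  | 0 => ⊤
  | k + 1 => Submodule.span ℂ {z | ∃ u ∈ ds n m k, ∃ v ∈ ds n m k, z = br n m u v}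

/-- Lower central series of `SL^{n,m}`. -/
noncomputable def lcs (n m : ℕ) : ℕ → Submodule ℂ (V n m)
  | 0 => ⊤
  | k + 1 => Submodule.span ℂ {z | ∃ u ∈ lcs n m k, ∃ v : V n m, z = br n m u v}

/-- Lower central series of the derived subalgebra `(SL^{n,m})^2`. -/
noncomputable def lcsDer (n m : ℕ) : ℕ → Submodule ℂ (V n m)
  | 0 => derSub n m
  | k + 1 => Submodule.span ℂ {z | ∃ u ∈ lcsDer n m k, ∃ v ∈ derSub n m, z = br n m u v}

open Finsupp

section

variable {n m : ℕ}

lemma br_def (u v : V n m) :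
    br n m u v = u.sum fun a α => v.sum fun b β => (α * β) • c n m a b := by
  simp [br, brL, Finsupp.lsum_apply, Finsupp.sum, LinearMap.toSpanSingleton_apply,
    Finset.smul_sum, smul_smul]

lemma br_single (a b : Idx n m) (α β : ℂ) :
    br n m (single a α) (single b β) = (α * β) • c n m a b := by
  rw [br_def, sum_single_index, sum_single_index] <;> simp

lemma br_zero_right (u : V n m) : br n m u 0 = 0 := map_zero (brL n m u)

lemma X_eq_single (i : Fin n) : X n m (i.val + 1) = single (Sum.inl i) 1 := by
  rw [X, dif_pos ⟨by omega, i.isLt⟩]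
  rfl

lemma Y_eq_single (j : Fin m) : Y n m (j.val + 1) = single (Sum.inr (Sum.inr j)) 1 := by
  rw [Y, dif_pos ⟨by omega, j.isLt⟩]
  rfl

lemma T_one_eq_single : T n m 1 = single (Sum.inr (Sum.inl 0)) 1 := by
  rw [T, dif_pos ⟨le_rfl, by omega⟩]
  rfl

lemma X_ne_zero {s : ℕ} (h1 : 1 ≤ s) (h2 : s ≤ n) : X n m s ≠ 0 := by
  simp [X, h1, h2]

lemma br_T_one_X (s : ℕ) : br n m (T n m 1) (X n m s) = (s : ℂ) • X n m s := by
  by_cases hs : 1 ≤ s ∧ s ≤ n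
  · obtain ⟨i, rfl⟩ : ∃ i : Fin n, s = i.val + 1 := ⟨⟨s - 1, by omega⟩, by simp; omega⟩
    rw [T_one_eq_single, X_eq_single, br_single]
    simp [c, X_eq_single]
  · simp [X, hs, br_zero_right]

lemma br_T_one_Y (s : ℕ) : br n m (T n m 1) (Y n m s) = (s : ℂ) • Y n m s := by
  by_cases hs : 1 ≤ s ∧ s ≤ m
  · obtain ⟨j, rfl⟩ : ∃ j : Fin m, s = j.val + 1 := ⟨⟨s - 1, by omega⟩, by simp; omega⟩
    rw [T_one_eq_single, Y_eq_single, br_single]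
    simp [c, Y_eq_single]
  · simp [Y, hs, br_zero_right]

lemma br_X_one_T_one (hn : 1 ≤ n) : br n m (X n m 1) (T n m 1) = -X n m 1 := by
  obtain ⟨k, rfl⟩ : ∃ k, n = k + 1 := ⟨n - 1, by omega⟩
  have hX : X (k + 1) m 1 = single (Sum.inl 0) 1 := X_eq_single 0
  rw [T_one_eq_single, hX, br_single]
  simp [c, hX]

def weight : Idx n m → ℕ :=
  Sum.elim (fun i => i.val + 1) (Sum.elim (fun _ => 0) (fun j => j.val + 1))

noncomputable def weightGE (n m k : ℕ) : Submodule ℂ (V n m) :=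
  supported ℂ ℂ {a | k ≤ weight a}

lemma weightGE_anti {j k : ℕ} (h : j ≤ k) : weightGE n m k ≤ weightGE n m j :=
  supported_mono fun _ ha => le_trans h ha

lemma mem_weightGE_zero (u : V n m) : u ∈ weightGE n m 0 :=
  (mem_supported ℂ u).2 fun _ _ => Nat.zero_le _

lemma weightGE_eq_bot : weightGE n m (n + m + 1) = ⊥ := by
  have hempty : {a : Idx n m | n + m + 1 ≤ weight a} = ∅ := by
    ext (i | s | j) <;> simp [weight] <;> omega
  rw [weightGE, hempty, supported_empty]

lemma X_mem_weightGE {j k : ℕ} (h : j ≤ k) : X n m k ∈ weightGE n m j := by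
  by_cases hk : 1 ≤ k ∧ k ≤ n
  · obtain ⟨i, rfl⟩ : ∃ i : Fin n, k = i.val + 1 := ⟨⟨k - 1, by omega⟩, by simp; omega⟩
    exact X_eq_single i ▸ single_mem_supported ℂ _ h
  · simp [X, hk]

lemma Y_mem_weightGE {j k : ℕ} (h : j ≤ k) : Y n m k ∈ weightGE n m j := by
  by_cases hk : 1 ≤ k ∧ k ≤ m
  · obtain ⟨i, rfl⟩ : ∃ i : Fin m, k = i.val + 1 := ⟨⟨k - 1, by omega⟩, by simp; omega⟩
    exact Y_eq_single i ▸ single_mem_supported ℂ _ h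
  · simp [Y, hk]

lemma c_mem_weightGE (a b : Idx n m) :
    c n m a b ∈ weightGE n m (max (weight a + weight b) 1) := by
  rcases a with i | s | j <;> rcases b with i' | s' | j' <;>
    simp only [c, weight, Sum.elim_inl, Sum.elim_inr] <;>
    (try split_ifs) <;>
    (try simp only [neg_mem_iff, neg_zero, zero_mem]) <;>
    (try with_reducible apply Submodule.smul_mem) <;>
    first
      | (with_reducible apply X_mem_weightGE); omega
      | (with_reducible apply Y_mem_weightGE); omega

lemma br_mem_weightGE {p q : ℕ} {u v : V n m} (hu : u ∈ weightGE n m p)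
    (hv : v ∈ weightGE n m q) : br n m u v ∈ weightGE n m (max (p + q) 1) := by
  rw [br_def]
  refine Submodule.sum_mem _ fun a ha => Submodule.sum_mem _ fun b hb => ?_
  have hpa : p ≤ weight a := (mem_supported ℂ u).1 hu ha
  have hqb : q ≤ weight b := (mem_supported ℂ v).1 hv hb
  exact Submodule.smul_mem _ _ (weightGE_anti (by omega) (c_mem_weightGE a b))

lemma weightGE_one_eq_span : weightGE n m 1 = Submodule.span ℂ
    ({v | ∃ s : ℕ, 1 ≤ s ∧ s ≤ n ∧ v = X n m s} ∪
     {v | ∃ s : ℕ, 1 ≤ s ∧ s ≤ m ∧ v = Y n m s}) := by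
  rw [weightGE, supported_eq_span_single]
  congr 1
  ext v
  constructor
  · rintro ⟨i | s | j, ha, rfl⟩
    · exact Or.inl ⟨i.val + 1, by omega, i.isLt, (X_eq_single i).symm⟩
    · simp [weight] at ha
    · exact Or.inr ⟨j.val + 1, by omega, j.isLt, (Y_eq_single j).symm⟩
  · rintro (⟨s, h1, h2, rfl⟩ | ⟨s, h1, h2, rfl⟩)
    · obtain ⟨i, rfl⟩ : ∃ i : Fin n, s = i.val + 1 := ⟨⟨s - 1, by omega⟩, by simp; omega⟩
      exact ⟨Sum.inl i, by simp [weight], (X_eq_single i).symm⟩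
    · obtain ⟨j, rfl⟩ : ∃ j : Fin m, s = j.val + 1 := ⟨⟨s - 1, by omega⟩, by simp; omega⟩
      exact ⟨Sum.inr (Sum.inr j), by simp [weight], (Y_eq_single j).symm⟩

lemma derSub_le_weightGE_one : derSub n m ≤ weightGE n m 1 := by
  rw [derSub, Submodule.span_le]
  rintro _ ⟨u, v, rfl⟩
  exact br_mem_weightGE (mem_weightGE_zero u) (mem_weightGE_zero v)

lemma mem_derSub_of_br_eq_smul {u v : V n m} {r : ℂ} (hr : r ≠ 0) (h : br n m u v = r • v) :
    v ∈ derSub n m := by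
  rw [← inv_smul_smul₀ hr v, ← h]
  exact Submodule.smul_mem _ _ (Submodule.subset_span ⟨u, v, rfl⟩)

lemma span_le_derSub : Submodule.span ℂ
    ({v | ∃ s : ℕ, 1 ≤ s ∧ s ≤ n ∧ v = X n m s} ∪
     {v | ∃ s : ℕ, 1 ≤ s ∧ s ≤ m ∧ v = Y n m s}) ≤ derSub n m := by
  rw [Submodule.span_le]
  rintro _ (⟨s, h1, -, rfl⟩ | ⟨s, h1, -, rfl⟩)
  · exact mem_derSub_of_br_eq_smul (Nat.cast_ne_zero.2 (by omega)) (br_T_one_X s)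
  · exact mem_derSub_of_br_eq_smul (Nat.cast_ne_zero.2 (by omega)) (br_T_one_Y s)

lemma lcsDer_le_weightGE (k : ℕ) : lcsDer n m k ≤ weightGE n m (k + 1) := by
  induction k with
  | zero => exact derSub_le_weightGE_one
  | succ k ih =>
    rw [lcsDer, Submodule.span_le]
    rintro _ ⟨u, hu, v, hv, rfl⟩
    exact weightGE_anti (by omega) (br_mem_weightGE (ih hu) (derSub_le_weightGE_one hv))

lemma ds_le_weightGE (k : ℕ) : ds n m k ≤ weightGE n m k := by
  induction k with
  | zero => exact fun u _ => mem_weightGE_zero u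
  | succ k ih =>
    rw [ds, Submodule.span_le]
    rintro _ ⟨u, hu, v, hv, rfl⟩
    exact weightGE_anti (by omega) (br_mem_weightGE (ih hu) (ih hv))

lemma X_one_mem_lcs (hn : 1 ≤ n) (k : ℕ) : X n m 1 ∈ lcs n m k := by
  induction k with
  | zero => exact Submodule.mem_top
  | succ k ih =>
    rw [← neg_neg (X n m 1), ← br_X_one_T_one hn, ← neg_one_smul ℂ]
    exact Submodule.smul_mem _ _ (Submodule.subset_span ⟨_, ih, _, rfl⟩)

end

/-- In `SL^{n,m}` the derived subalgebra equals the nilradical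
`L^{n,m} = span{x_1,…,x_n,y_1,…,y_m}`; `(SL^{n,m})^2` is nilpotent, and `SL^{n,m}` is
solvable but not nilpotent. -/
theorem SL_derived_eq_nilradical (n m : ℕ) (hn : 1 ≤ n) :
    derSub n m = Submodule.span ℂ
      ({v | ∃ s : ℕ, 1 ≤ s ∧ s ≤ n ∧ v = X n m s} ∪
       {v | ∃ s : ℕ, 1 ≤ s ∧ s ≤ m ∧ v = Y n m s}) ∧
    (∃ K : ℕ, lcsDer n m K = ⊥) ∧
    (∃ K : ℕ, ds n m K = ⊥) ∧
    (∀ K : ℕ, lcs n m K ≠ ⊥) := by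
  refine ⟨le_antisymm (weightGE_one_eq_span ▸ derSub_le_weightGE_one) span_le_derSub,
    ⟨n + m, eq_bot_iff.2 (weightGE_eq_bot ▸ lcsDer_le_weightGE (n + m))⟩,
    ⟨n + m + 1, eq_bot_iff.2 (weightGE_eq_bot ▸ ds_le_weightGE (n + m + 1))⟩, fun K hK => ?_⟩
  have hX := X_one_mem_lcs (m := m) hn K
  rw [hK, Submodule.mem_bot] at hX
  exact X_ne_zero le_rfl hn hX

end SolvableModelFiliform
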